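/- For an odd prime p, the Heisenberg group He_p of order p^3 has exactly 2p + 5 conjugacy classes of subgroups. -/

import Mathlib

open Pointwise

/-- The number of subgroups of a group `G`, i.e. `|L(G)|`. -/
noncomputable def numSubgroups (G : Type*) [Group G] : ℕ := Nat.card (Subgroup G)

/-- The number of conjugacy classes of subgroups of `G`, i.e. `k'(G)`:
the number of orbits of the conjugation action of `G` on its subgroup lattice. -/
noncomputable def numConjClassesSubgroups (G : Type*) [Group G] : ℕ :=
  Nat.card (Quotient (MulAction.orbitRel (ConjAct G) (Subgroup G)))

/-- `d'(G) = k'(G) / |L(G)|`. -/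
noncomputable def dprime (G : Type*) [Group G] : ℚ :=
  (numConjClassesSubgroups G : ℚ) / (numSubgroups G : ℚ)

/-- The Heisenberg group modulo `p`: triples `(a,b,c)` with
`(a,b,c)*(a',b',c') = (a+a', b+b', c+c'+a·b')`. -/
def Heisenberg (p : ℕ) : Type := ZMod p × ZMod p × ZMod p

namespace Heisenberg

variable {p : ℕ}

instance : Mul (Heisenberg p) :=
  ⟨fun a b => (a.1 + b.1, a.2.1 + b.2.1, a.2.2 + b.2.2 + a.1 * b.2.1)⟩

instance : One (Heisenberg p) := ⟨((0 : ZMod p), (0 : ZMod p), (0 : ZMod p))⟩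

instance : Inv (Heisenberg p) := ⟨fun a => (-a.1, -a.2.1, -a.2.2 + a.1 * a.2.1)⟩

theorem mul_def (a b : Heisenberg p) :
    a * b = (a.1 + b.1, a.2.1 + b.2.1, a.2.2 + b.2.2 + a.1 * b.2.1) := rfl

theorem one_def : (1 : Heisenberg p) = ((0 : ZMod p), 0, 0) := rfl

theorem inv_def (a : Heisenberg p) : a⁻¹ = (-a.1, -a.2.1, -a.2.2 + a.1 * a.2.1) := rfl

instance : Group (Heisenberg p) where
  mul_assoc a b c := by
    simp only [mul_def]
    repeat erw [mul_def]
    refine Prod.ext ?_ (Prod.ext ?_ ?_) <;> simp <;> ring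
  one_mul a := by
    simp only [mul_def, one_def]
    repeat erw [mul_def]
    refine Prod.ext ?_ (Prod.ext ?_ ?_) <;> simp
  mul_one a := by
    simp only [mul_def, one_def]
    repeat erw [mul_def]
    refine Prod.ext ?_ (Prod.ext ?_ ?_) <;> simp
  inv_mul_cancel a := by
    simp only [mul_def, inv_def, one_def]
    repeat erw [mul_def]
    refine Prod.ext ?_ (Prod.ext ?_ ?_) <;> simp

instance [NeZero p] : Finite (Heisenberg p) :=
  inferInstanceAs (Finite (ZMod p × ZMod p × ZMod p))

end Heisenberg

namespace HeisAux

variable {p : ℕ}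

/-- Explicit constructor, to keep instance resolution on `Heisenberg p` (not `Prod`). -/
def mk (a b c : ZMod p) : Heisenberg p := (a, b, c)

@[simp] lemma mk_fst (a b c : ZMod p) : (mk a b c).1 = a := rfl
@[simp] lemma mk_snd (a b c : ZMod p) : (mk a b c).2.1 = b := rfl
@[simp] lemma mk_trd (a b c : ZMod p) : (mk a b c).2.2 = c := rfl

lemma eta (x : Heisenberg p) : x = mk x.1 x.2.1 x.2.2 := rfl

@[simp] lemma mk_inj {a b c a' b' c' : ZMod p} :
    (mk a b c : Heisenberg p) = mk a' b' c' ↔ a = a' ∧ b = b' ∧ c = c' := by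
  constructor
  · intro h
    exact ⟨congrArg Prod.fst h, congrArg (fun x => x.2.1) h, congrArg (fun x => x.2.2) h⟩
  · rintro ⟨rfl, rfl, rfl⟩; rfl

lemma ext {x y : Heisenberg p} (h1 : x.1 = y.1) (h2 : x.2.1 = y.2.1) (h3 : x.2.2 = y.2.2) :
    x = y := by
  rw [eta x, eta y, h1, h2, h3]

@[simp] lemma mul_mk (a b c a' b' c' : ZMod p) :
    (mk a b c : Heisenberg p) * mk a' b' c' = mk (a + a') (b + b') (c + c' + a * b') := rfl

lemma one_eq : (1 : Heisenberg p) = mk 0 0 0 := rfl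

lemma pow_def (x : Heisenberg p) (n : ℕ) :
    x ^ n = mk ((n : ZMod p) * x.1) ((n : ZMod p) * x.2.1)
      ((n : ZMod p) * x.2.2 + (n.choose 2 : ZMod p) * (x.1 * x.2.1)) := by
  induction n with
  | zero =>
    rw [pow_zero, one_eq]
    simp
  | succ n ih =>
    rw [pow_succ, ih, eta x, mul_mk]
    have h2 : (n+1).choose 2 = n.choose 2 + n := by
      rw [Nat.choose_succ_succ]
      simp [Nat.choose_one_right, Nat.add_comm]
    simp only [mk_fst, mk_snd, mk_trd, mk_inj, h2]
    push_cast
    refine ⟨by ring, by ring, by ring⟩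

lemma conj_def (g x : Heisenberg p) :
    g * x * g⁻¹ = mk x.1 x.2.1 (x.2.2 + g.1 * x.2.1 - g.2.1 * x.1) := by
  apply ext <;> simp [Heisenberg.mul_def, Heisenberg.inv_def] <;> erw [Heisenberg.mul_def] <;> simp <;> ring

lemma pow_p (hodd : Odd p) (x : Heisenberg p) : x ^ p = 1 := by
  have h1 : ((p : ZMod p)) = 0 := ZMod.natCast_self p
  have h2 : ((p.choose 2 : ℕ) : ZMod p) = 0 := by
    rw [ZMod.natCast_eq_zero_iff]
    rcases hodd with ⟨k, hk⟩
    have h3 : p.choose 2 = p * k := by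
      subst hk
      rw [Nat.choose_two_right, show 2*k+1-1 = 2*k from rfl,
        Nat.mul_div_assoc _ (Dvd.intro k rfl), Nat.mul_div_cancel_left k (by norm_num)]
    simp [h3]
  rw [pow_def, h1, h2, one_eq]
  simp

lemma pow_mod (x : Heisenberg p) (hxp : x ^ p = 1) (n : ℕ) : x ^ n = x ^ (n % p) := by
  conv_lhs => rw [← Nat.div_add_mod n p]
  rw [pow_add, pow_mul, hxp, one_pow, one_mul]

lemma mem_zpowers_iff_nat [NeZero p] {x y : Heisenberg p} :
    y ∈ Subgroup.zpowers x ↔ ∃ n : ℕ, x ^ n = y := by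
  rw [← mem_powers_iff_mem_zpowers, Submonoid.mem_powers_iff]

lemma central_pow (c : ZMod p) (n : ℕ) :
    (mk 0 0 c : Heisenberg p) ^ n = mk 0 0 ((n:ZMod p) * c) := by
  rw [pow_def]
  simp

end HeisAux
namespace HeisAux

variable {p : ℕ}

/-- The center `{(0,0,c)}`. -/
def Zgrp (p : ℕ) : Subgroup (Heisenberg p) where
  carrier := {x | x.1 = 0 ∧ x.2.1 = 0}
  one_mem' := ⟨rfl, rfl⟩
  mul_mem' := by
    rintro a b ⟨ha1, ha2⟩ ⟨hb1, hb2⟩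
    exact ⟨by simp [Heisenberg.mul_def, ha1, hb1], by simp [Heisenberg.mul_def, ha2, hb2]⟩
  inv_mem' := by
    rintro a ⟨h1, h2⟩
    exact ⟨by simp [Heisenberg.inv_def, h1], by simp [Heisenberg.inv_def, h2]⟩

lemma mem_Zgrp {x : Heisenberg p} : x ∈ Zgrp p ↔ x.1 = 0 ∧ x.2.1 = 0 := Iff.rfl

/-- Subgroup of order `p^2`: preimage of the line of slope `t`. -/
def Mslope (p : ℕ) (t : ZMod p) : Subgroup (Heisenberg p) where
  carrier := {x | x.2.1 = x.1 * t}
  one_mem' := by show (0 : ZMod p) = 0 * t; simp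
  mul_mem' := by
    rintro a b ha hb
    show (a * b).2.1 = (a * b).1 * t
    simp only [Set.mem_setOf_eq, Heisenberg.mul_def] at *
    rw [ha, hb]; ring
  inv_mem' := by
    rintro a ha
    show (a⁻¹).2.1 = (a⁻¹).1 * t
    simp only [Set.mem_setOf_eq, Heisenberg.inv_def] at *
    rw [ha]; ring

lemma mem_Mslope {t : ZMod p} {x : Heisenberg p} : x ∈ Mslope p t ↔ x.2.1 = x.1 * t := Iff.rfl

/-- Subgroup of order `p^2`: preimage of the vertical line. -/
def Minf (p : ℕ) : Subgroup (Heisenberg p) where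
  carrier := {x | x.1 = 0}
  one_mem' := rfl
  mul_mem' := by
    rintro a b ha hb
    show (a * b).1 = 0
    simp only [Set.mem_setOf_eq, Heisenberg.mul_def] at *
    rw [ha, hb]; ring
  inv_mem' := by
    rintro a ha
    show (a⁻¹).1 = 0
    simp only [Set.mem_setOf_eq, Heisenberg.inv_def] at *
    rw [ha]; ring

lemma mem_Minf {x : Heisenberg p} : x ∈ Minf p ↔ x.1 = 0 := Iff.rfl

/-- Index type for the `2p+5` conjugacy classes of subgroups. -/
def Idx (p : ℕ) : Type := (Unit ⊕ Unit ⊕ Unit) ⊕ (Option (ZMod p) ⊕ Option (ZMod p))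

def ibot : Idx p := Sum.inl (Sum.inl ())
def iZ : Idx p := Sum.inl (Sum.inr (Sum.inl ()))
def itop : Idx p := Sum.inl (Sum.inr (Sum.inr ()))
def iline (o : Option (ZMod p)) : Idx p := Sum.inr (Sum.inl o)
def iplane (o : Option (ZMod p)) : Idx p := Sum.inr (Sum.inr o)

/-- Representatives of the conjugacy classes of subgroups. -/
def rep : Idx p → Subgroup (Heisenberg p)
  | Sum.inl (Sum.inl _) => ⊥
  | Sum.inl (Sum.inr (Sum.inl _)) => Zgrp p
  | Sum.inl (Sum.inr (Sum.inr _)) => ⊤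
  | Sum.inr (Sum.inl (some t)) => Subgroup.zpowers (mk 1 t 0)
  | Sum.inr (Sum.inl none) => Subgroup.zpowers (mk 0 1 0)
  | Sum.inr (Sum.inr (some t)) => Mslope p t
  | Sum.inr (Sum.inr none) => Minf p

instance [NeZero p] : Fintype (Idx p) := by unfold Idx; infer_instance

lemma card_Idx [NeZero p] : Nat.card (Idx p) = 2 * p + 5 := by
  have : Nat.card (Idx p) = Nat.card ((Unit ⊕ Unit ⊕ Unit) ⊕ (Option (ZMod p) ⊕ Option (ZMod p))) := rfl
  rw [this]
  simp [Nat.card_eq_fintype_card, ZMod.card]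
  ring

end HeisAux
namespace HeisAux

variable {p : ℕ}

lemma mem_smul_iff {g : ConjAct (Heisenberg p)} {H : Subgroup (Heisenberg p)}
    {x : Heisenberg p} :
    x ∈ g • H ↔ ∃ h ∈ H, (ConjAct.ofConjAct g) * h * (ConjAct.ofConjAct g)⁻¹ = x := by
  rw [Subgroup.mem_smul_pointwise_iff_exists]
  simp only [ConjAct.smul_def]

lemma exists_mem_smul_iff (g : ConjAct (Heisenberg p)) (H : Subgroup (Heisenberg p))
    (a b : ZMod p) :
    (∃ c, (mk a b c : Heisenberg p) ∈ g • H) ↔ (∃ c, (mk a b c : Heisenberg p) ∈ H) := by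
  constructor
  · rintro ⟨c, hc⟩
    rw [mem_smul_iff] at hc
    obtain ⟨h, hh, he⟩ := hc
    rw [conj_def] at he
    rw [mk_inj] at he
    obtain ⟨h1, h2, h3⟩ := he
    refine ⟨h.2.2, ?_⟩
    rw [← h1, ← h2, ← eta h]
    exact hh
  · rintro ⟨c, hc⟩
    set g' := ConjAct.ofConjAct g with hg'
    refine ⟨c + g'.1 * b - g'.2.1 * a, ?_⟩
    rw [mem_smul_iff]
    exact ⟨mk a b c, hc, by rw [conj_def]; simp; rfl⟩

lemma central_mem_smul_iff (g : ConjAct (Heisenberg p)) (H : Subgroup (Heisenberg p))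
    (c : ZMod p) : (mk 0 0 c : Heisenberg p) ∈ g • H ↔ (mk 0 0 c : Heisenberg p) ∈ H := by
  constructor
  · intro hc
    rw [mem_smul_iff] at hc
    obtain ⟨h, hh, he⟩ := hc
    rw [conj_def, mk_inj] at he
    obtain ⟨h1, h2, h3⟩ := he
    have : h = mk 0 0 c := by
      rw [eta h, h1, h2, mk_inj]
      refine ⟨rfl, rfl, ?_⟩
      rw [← h3, h1, h2]; ring
    rwa [this] at hh
  · intro hc
    rw [mem_smul_iff]
    refine ⟨mk 0 0 c, hc, ?_⟩
    rw [conj_def]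
    simp

open Classical in
noncomputable def slopeOf (H : Subgroup (Heisenberg p)) : ZMod p :=
  Classical.epsilon (fun t => ∃ c, (mk 1 t c : Heisenberg p) ∈ H)

open Classical in
noncomputable def classifier (H : Subgroup (Heisenberg p)) : Idx p :=
  if ∃ t c, (mk 1 t c : Heisenberg p) ∈ H then
    if ∃ c, (mk 0 1 c : Heisenberg p) ∈ H then itop
    else if (mk 0 0 1 : Heisenberg p) ∈ H then iplane (some (slopeOf H))
    else iline (some (slopeOf H))
  else if ∃ c, (mk 0 1 c : Heisenberg p) ∈ H then
    if (mk 0 0 1 : Heisenberg p) ∈ H then iplane none else iline none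
  else if (mk 0 0 1 : Heisenberg p) ∈ H then iZ else ibot

lemma classifier_smul (g : ConjAct (Heisenberg p)) (H : Subgroup (Heisenberg p)) :
    classifier (g • H) = classifier H := by
  have e1 : (∃ t c, (mk 1 t c : Heisenberg p) ∈ g • H)
      = (∃ t c, (mk 1 t c : Heisenberg p) ∈ H) := by
    refine propext ⟨?_, ?_⟩ <;> rintro ⟨t, hc⟩
    · exact ⟨t, (exists_mem_smul_iff g H 1 t).mp hc⟩
    · exact ⟨t, (exists_mem_smul_iff g H 1 t).mpr hc⟩
  have e2 : (∃ c, (mk 0 1 c : Heisenberg p) ∈ g • H)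
      = (∃ c, (mk 0 1 c : Heisenberg p) ∈ H) := propext (exists_mem_smul_iff g H 0 1)
  have e3 : ((mk 0 0 1 : Heisenberg p) ∈ g • H) = ((mk 0 0 1 : Heisenberg p) ∈ H) :=
    propext (central_mem_smul_iff g H 1)
  have e4 : slopeOf (g • H) = slopeOf H := by
    unfold slopeOf
    congr 1
    funext t
    exact propext (exists_mem_smul_iff g H 1 t)
  unfold classifier
  rw [e1, e2, e3, e4]

end HeisAux
namespace HeisAux

variable {p : ℕ}

lemma pow_eq_one_of_cast_zero [NeZero p] (hodd : Odd p) (x : Heisenberg p) {n : ℕ}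
    (h : (n : ZMod p) = 0) : x ^ n = 1 := by
  obtain ⟨m, rfl⟩ := (ZMod.natCast_eq_zero_iff n p).mp h
  rw [pow_mul, pow_p hodd, one_pow]

lemma classifier_rep [Fact p.Prime] (hodd : Odd p) (i : Idx p) : classifier (rep i) = i := by
  have hp : p.Prime := Fact.out
  haveI : NeZero p := ⟨hp.ne_zero⟩
  have h10 : (1 : ZMod p) ≠ 0 := one_ne_zero
  obtain ((u|u|u)|((_|t)|(_|t))) := i
  · -- ⊥
    rcases u
    show classifier (⊥ : Subgroup (Heisenberg p)) = _
    have c1 : ¬ ∃ t c, (mk 1 t c : Heisenberg p) ∈ (⊥ : Subgroup (Heisenberg p)) := by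
      rintro ⟨t, c, hc⟩
      rw [Subgroup.mem_bot, one_eq, mk_inj] at hc
      exact h10 hc.1
    have c2 : ¬ ∃ c, (mk 0 1 c : Heisenberg p) ∈ (⊥ : Subgroup (Heisenberg p)) := by
      rintro ⟨c, hc⟩
      rw [Subgroup.mem_bot, one_eq, mk_inj] at hc
      exact h10 hc.2.1
    have c3 : ¬ (mk 0 0 1 : Heisenberg p) ∈ (⊥ : Subgroup (Heisenberg p)) := by
      intro hc
      rw [Subgroup.mem_bot, one_eq, mk_inj] at hc
      exact h10 hc.2.2
    unfold classifier
    rw [if_neg c1, if_neg c2, if_neg c3]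
    rfl
  · -- Zgrp
    rcases u
    show classifier (Zgrp p) = _
    have c1 : ¬ ∃ t c, (mk 1 t c : Heisenberg p) ∈ Zgrp p := by
      rintro ⟨t, c, hc⟩
      exact h10 hc.1
    have c2 : ¬ ∃ c, (mk 0 1 c : Heisenberg p) ∈ Zgrp p := by
      rintro ⟨c, hc⟩
      exact h10 hc.2
    have c3 : (mk 0 0 1 : Heisenberg p) ∈ Zgrp p := ⟨rfl, rfl⟩
    unfold classifier
    rw [if_neg c1, if_neg c2, if_pos c3]
    rfl
  · -- ⊤
    rcases u
    show classifier (⊤ : Subgroup (Heisenberg p)) = _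
    have c1 : ∃ t c, (mk 1 t c : Heisenberg p) ∈ (⊤ : Subgroup (Heisenberg p)) :=
      ⟨0, 0, trivial⟩
    have c2 : ∃ c, (mk 0 1 c : Heisenberg p) ∈ (⊤ : Subgroup (Heisenberg p)) := ⟨0, trivial⟩
    unfold classifier
    rw [if_pos c1, if_pos c2]
    rfl
  · -- zpowers (mk 0 1 0)
    show classifier (Subgroup.zpowers (mk 0 1 0)) = _
    have c1 : ¬ ∃ t c, (mk 1 t c : Heisenberg p) ∈ Subgroup.zpowers (mk 0 1 0) := by
      rintro ⟨t, c, hc⟩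
      rw [mem_zpowers_iff_nat] at hc
      obtain ⟨n, hn⟩ := hc
      rw [pow_def] at hn
      have := (mk_inj.mp hn).1
      rw [mk_fst, mul_zero] at this
      exact h10 this.symm
    have c2 : ∃ c, (mk 0 1 c : Heisenberg p) ∈ Subgroup.zpowers (mk 0 1 0) :=
      ⟨0, Subgroup.mem_zpowers _⟩
    have c3 : ¬ (mk 0 0 1 : Heisenberg p) ∈ Subgroup.zpowers (mk 0 1 0) := by
      intro hc
      rw [mem_zpowers_iff_nat] at hc
      obtain ⟨n, hn⟩ := hc
      rw [pow_def] at hn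
      have := (mk_inj.mp hn).2.2
      rw [mk_trd, mk_fst, mk_snd, mul_zero, zero_mul, mul_zero, add_zero] at this
      exact h10 this.symm
    unfold classifier
    rw [if_neg c1, if_pos c2, if_neg c3]
    rfl
  · -- zpowers (mk 1 t 0)
    show classifier (Subgroup.zpowers (mk 1 t 0)) = _
    have key : ∀ n : ℕ, ((n : ZMod p) = 0) → (mk 1 t 0 : Heisenberg p) ^ n = 1 :=
      fun n h => pow_eq_one_of_cast_zero hodd _ h
    have c1 : ∃ t' c, (mk 1 t' c : Heisenberg p) ∈ Subgroup.zpowers (mk 1 t 0) :=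
      ⟨t, 0, Subgroup.mem_zpowers _⟩
    have c2 : ¬ ∃ c, (mk 0 1 c : Heisenberg p) ∈ Subgroup.zpowers (mk 1 t 0) := by
      rintro ⟨c, hc⟩
      rw [mem_zpowers_iff_nat] at hc
      obtain ⟨n, hn⟩ := hc
      have hn' := hn
      rw [pow_def] at hn'
      have h0 : (n : ZMod p) = 0 := by
        have := (mk_inj.mp hn').1
        rw [mk_fst, mul_one] at this
        exact this
      rw [key n h0, one_eq, mk_inj] at hn
      exact h10 hn.2.1.symm
    have c3 : ¬ (mk 0 0 1 : Heisenberg p) ∈ Subgroup.zpowers (mk 1 t 0) := by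
      intro hc
      rw [mem_zpowers_iff_nat] at hc
      obtain ⟨n, hn⟩ := hc
      have hn' := hn
      rw [pow_def] at hn'
      have h0 : (n : ZMod p) = 0 := by
        have := (mk_inj.mp hn').1
        rw [mk_fst, mul_one] at this
        exact this
      rw [key n h0, one_eq, mk_inj] at hn
      exact h10 hn.2.2.symm
    have hu : slopeOf (Subgroup.zpowers (mk 1 t 0)) = t := by
      have hs := Classical.epsilon_spec (α := ZMod p)
        (p := fun t' => ∃ c, (mk 1 t' c : Heisenberg p) ∈ Subgroup.zpowers (mk 1 t 0)) c1
      obtain ⟨c, hc⟩ := hs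
      rw [mem_zpowers_iff_nat] at hc
      obtain ⟨n, hn⟩ := hc
      rw [pow_def] at hn
      obtain ⟨e1, e2, _⟩ := mk_inj.mp hn
      simp only [mk_fst, mk_snd, mul_one] at e1 e2
      rw [show slopeOf (Subgroup.zpowers (mk 1 t 0)) = Classical.epsilon
        (fun t' => ∃ c, (mk 1 t' c : Heisenberg p) ∈ Subgroup.zpowers (mk 1 t 0)) from rfl]
      rw [← e2, e1, one_mul]
    unfold classifier
    rw [if_pos c1, if_neg c2, if_neg c3, hu]
    rfl
  · -- Minf
    show classifier (Minf p) = _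
    have c1 : ¬ ∃ t' c, (mk 1 t' c : Heisenberg p) ∈ Minf p := by
      rintro ⟨t', c, hc⟩
      exact h10 hc
    have c2 : ∃ c, (mk 0 1 c : Heisenberg p) ∈ Minf p := ⟨0, rfl⟩
    have c3 : (mk 0 0 1 : Heisenberg p) ∈ Minf p := rfl
    unfold classifier
    rw [if_neg c1, if_pos c2, if_pos c3]
    rfl
  · -- Mslope t
    show classifier (Mslope p t) = _
    have c1 : ∃ t' c, (mk 1 t' c : Heisenberg p) ∈ Mslope p t := by
      refine ⟨t, 0, ?_⟩
      rw [mem_Mslope, mk_snd, mk_fst, one_mul]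
    have c2 : ¬ ∃ c, (mk 0 1 c : Heisenberg p) ∈ Mslope p t := by
      rintro ⟨c, hc⟩
      rw [mem_Mslope, mk_snd, mk_fst, zero_mul] at hc
      exact h10 hc
    have c3 : (mk 0 0 1 : Heisenberg p) ∈ Mslope p t := by
      rw [mem_Mslope, mk_snd, mk_fst, zero_mul]
    have hu : slopeOf (Mslope p t) = t := by
      have hs := Classical.epsilon_spec (α := ZMod p)
        (p := fun t' => ∃ c, (mk 1 t' c : Heisenberg p) ∈ Mslope p t) c1
      obtain ⟨c, hc⟩ := hs
      rw [mem_Mslope, mk_snd, mk_fst, one_mul] at hc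
      exact hc
    unfold classifier
    rw [if_pos c1, if_neg c2, if_pos c3, hu]
    rfl

end HeisAux
namespace HeisAux

variable {p : ℕ}

lemma val_cast [NeZero p] (m : ZMod p) : ((m.val : ℕ) : ZMod p) = m := by
  rw [ZMod.natCast_val, ZMod.cast_id]

@[simp] lemma mul_fst (a b : Heisenberg p) : (a * b).1 = a.1 + b.1 := rfl
@[simp] lemma mul_snd (a b : Heisenberg p) : (a * b).2.1 = a.2.1 + b.2.1 := rfl
@[simp] lemma mul_trd (a b : Heisenberg p) : (a * b).2.2 = a.2.2 + b.2.2 + a.1 * b.2.1 := rfl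
@[simp] lemma inv_fst (a : Heisenberg p) : (a⁻¹).1 = -a.1 := rfl
@[simp] lemma inv_snd (a : Heisenberg p) : (a⁻¹).2.1 = -a.2.1 := rfl
@[simp] lemma inv_trd (a : Heisenberg p) : (a⁻¹).2.2 = -a.2.2 + a.1 * a.2.1 := rfl

lemma comm_def (x y : Heisenberg p) :
    x * y * x⁻¹ * y⁻¹ = mk 0 0 (x.1 * y.2.1 - x.2.1 * y.1) := by
  apply ext <;> simp <;> ring

lemma central_closure [Fact p.Prime] {H : Subgroup (Heisenberg p)} {c : ZMod p}
    (hc : c ≠ 0) (h : (mk 0 0 c : Heisenberg p) ∈ H) (d : ZMod p) :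
    (mk 0 0 d : Heisenberg p) ∈ H := by
  haveI : NeZero p := ⟨(Fact.out : p.Prime).ne_zero⟩
  have hm := H.pow_mem h (d * c⁻¹).val
  rw [central_pow, val_cast] at hm
  have e : d * c⁻¹ * c = d := by field_simp
  rwa [e] at hm

lemma smul_zpowers (g x : Heisenberg p) :
    (ConjAct.toConjAct g) • Subgroup.zpowers x = Subgroup.zpowers (g * x * g⁻¹) := by
  ext y
  rw [mem_smul_iff]
  simp only [ConjAct.ofConjAct_toConjAct]
  constructor
  · rintro ⟨h, hh, rfl⟩
    rw [Subgroup.mem_zpowers_iff] at hh ⊢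
    obtain ⟨k, rfl⟩ := hh
    exact ⟨k, conj_zpow⟩
  · intro hy
    rw [Subgroup.mem_zpowers_iff] at hy
    obtain ⟨k, rfl⟩ := hy
    exact ⟨x ^ k, Subgroup.mem_zpowers_iff.mpr ⟨k, rfl⟩, conj_zpow.symm⟩

lemma zpowers_pow_eq [Fact p.Prime] (hodd : Odd p) (x : Heisenberg p) {n : ℕ}
    (hn : (n : ZMod p) ≠ 0) : Subgroup.zpowers (x ^ n) = Subgroup.zpowers x := by
  haveI : NeZero p := ⟨(Fact.out : p.Prime).ne_zero⟩
  have hp1 : 1 < p := (Fact.out : p.Prime).one_lt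
  apply le_antisymm
  · rw [Subgroup.zpowers_le]
    exact Subgroup.mem_zpowers_iff.mpr ⟨(n : ℤ), by rw [zpow_natCast]⟩
  · rw [Subgroup.zpowers_le, mem_zpowers_iff_nat]
    refine ⟨((n : ZMod p)⁻¹).val, ?_⟩
    rw [← pow_mul, pow_mod _ (pow_p hodd _)]
    have hcast : ((n * ((n : ZMod p)⁻¹).val : ℕ) : ZMod p) = ((1 : ℕ) : ZMod p) := by
      push_cast
      rw [ZMod.natCast_val, ZMod.cast_id, mul_inv_cancel₀ hn]
    have hmod : (n * ((n : ZMod p)⁻¹).val) % p = 1 % p :=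
      (ZMod.natCast_eq_natCast_iff _ _ _).mp hcast
    rw [hmod, Nat.mod_eq_of_lt hp1, pow_one]

end HeisAux
namespace HeisAux

variable {p : ℕ}

lemma classify [Fact p.Prime] (hodd : Odd p) (H : Subgroup (Heisenberg p)) :
    ∃ (i : Idx p) (g : ConjAct (Heisenberg p)), g • rep i = H := by
  haveI : NeZero p := ⟨(Fact.out : p.Prime).ne_zero⟩
  by_cases hcen : ∀ x ∈ H, x.1 = 0 ∧ x.2.1 = 0
  · by_cases hbot : H = ⊥
    · exact ⟨ibot, 1, by rw [one_smul]; exact hbot.symm⟩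
    · refine ⟨iZ, 1, ?_⟩
      rw [one_smul]
      show Zgrp p = H
      obtain ⟨x, hxH, hx1⟩ : ∃ x ∈ H, x ≠ 1 := by
        by_contra hno
        push_neg at hno
        exact hbot ((Subgroup.eq_bot_iff_forall H).mpr hno)
      obtain ⟨hxa, hxb⟩ := hcen x hxH
      have hc : x.2.2 ≠ 0 := by
        intro h0
        exact hx1 (by rw [eta x, hxa, hxb, h0]; rfl)
      have hxe : (mk 0 0 x.2.2 : Heisenberg p) = x := ext hxa.symm hxb.symm rfl
      have hx' : (mk 0 0 x.2.2 : Heisenberg p) ∈ H := by rw [hxe]; exact hxH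
      apply le_antisymm
      · rintro y ⟨hy1, hy2⟩
        rw [eta y, hy1, hy2]
        exact central_closure hc hx' _
      · intro y hy
        exact hcen y hy
  · push_neg at hcen
    obtain ⟨x, hxH, hxnc⟩ := hcen
    have hxnc' : ¬(x.1 = 0 ∧ x.2.1 = 0) := fun h => hxnc h.1 h.2
    by_cases hdet : ∃ y ∈ H, x.1 * y.2.1 ≠ x.2.1 * y.1
    · obtain ⟨y, hyH, hDne⟩ := hdet
      have hD : x.1 * y.2.1 - x.2.1 * y.1 ≠ 0 := sub_ne_zero_of_ne hDne
      have hcomm : (mk 0 0 (x.1 * y.2.1 - x.2.1 * y.1) : Heisenberg p) ∈ H := by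
        rw [← comm_def]
        exact mul_mem (mul_mem (mul_mem hxH hyH) (inv_mem hxH)) (inv_mem hyH)
      have hcent : ∀ d, (mk 0 0 d : Heisenberg p) ∈ H := central_closure hD hcomm
      refine ⟨itop, 1, ?_⟩
      rw [one_smul]
      show (⊤ : Subgroup (Heisenberg p)) = H
      symm
      rw [Subgroup.eq_top_iff']
      intro w
      have hmem : ∀ m n : ZMod p, m * x.1 + n * y.1 = w.1 → m * x.2.1 + n * y.2.1 = w.2.1 →
          w ∈ H := by
        intro m n h1 h2
        have hu := mul_mem (H.pow_mem hxH m.val) (H.pow_mem hyH n.val)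
        set u := x ^ m.val * y ^ n.val with hudef
        have hu1 : u.1 = w.1 := by
          rw [hudef, mul_fst, pow_def, pow_def, mk_fst, mk_fst, val_cast, val_cast]
          exact h1
        have hu2 : u.2.1 = w.2.1 := by
          rw [hudef, mul_snd, pow_def, pow_def, mk_snd, mk_snd, val_cast, val_cast]
          exact h2
        have hw : w = u * mk 0 0 (w.2.2 - u.2.2) := by
          apply ext
          · rw [mul_fst, mk_fst, add_zero, hu1]
          · rw [mul_snd, mk_snd, add_zero, hu2]
          · rw [mul_trd, mk_snd, mk_trd, mul_zero, add_zero]; ring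
        rw [hw]
        exact mul_mem hu (hcent _)
      refine hmem ((w.1 * y.2.1 - w.2.1 * y.1) / (x.1 * y.2.1 - x.2.1 * y.1))
        ((x.1 * w.2.1 - x.2.1 * w.1) / (x.1 * y.2.1 - x.2.1 * y.1)) ?_ ?_
      · rw [div_mul_eq_mul_div, div_mul_eq_mul_div, ← add_div, div_eq_iff hD]
        ring
      · rw [div_mul_eq_mul_div, div_mul_eq_mul_div, ← add_div, div_eq_iff hD]
        ring
    · push_neg at hdet
      by_cases hZc : ∃ c, c ≠ 0 ∧ (mk 0 0 c : Heisenberg p) ∈ H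
      · obtain ⟨c0, hc0, hc0H⟩ := hZc
        have hcent : ∀ d, (mk 0 0 d : Heisenberg p) ∈ H := central_closure hc0 hc0H
        have hmem : ∀ w : Heisenberg p, ∀ m : ZMod p, m * x.1 = w.1 → m * x.2.1 = w.2.1 →
            w ∈ H := by
          intro w m h1 h2
          have hu := H.pow_mem hxH m.val
          set u := x ^ m.val with hudef
          have hu1 : u.1 = w.1 := by rw [hudef, pow_def, mk_fst, val_cast]; exact h1
          have hu2 : u.2.1 = w.2.1 := by rw [hudef, pow_def, mk_snd, val_cast]; exact h2
          have hw : w = u * mk 0 0 (w.2.2 - u.2.2) := by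
            apply ext
            · rw [mul_fst, mk_fst, add_zero, hu1]
            · rw [mul_snd, mk_snd, add_zero, hu2]
            · rw [mul_trd, mk_snd, mk_trd, mul_zero, add_zero]; ring
          rw [hw]
          exact mul_mem hu (hcent _)
        by_cases hx1 : x.1 = 0
        · have hx2 : x.2.1 ≠ 0 := fun h => hxnc' ⟨hx1, h⟩
          refine ⟨iplane none, 1, ?_⟩
          rw [one_smul]
          show Minf p = H
          apply le_antisymm
          · intro w hw
            rw [mem_Minf] at hw
            refine hmem w (w.2.1 / x.2.1) ?_ ?_
            · rw [hx1, mul_zero, hw]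
            · field_simp
          · intro w hwH
            rw [mem_Minf]
            have hd := hdet w hwH
            rw [hx1, zero_mul] at hd
            rcases mul_eq_zero.mp hd.symm with h | h
            · exact absurd h hx2
            · exact h
        · refine ⟨iplane (some (x.2.1 / x.1)), 1, ?_⟩
          rw [one_smul]
          show Mslope p (x.2.1 / x.1) = H
          apply le_antisymm
          · intro w hw
            rw [mem_Mslope] at hw
            refine hmem w (w.1 / x.1) ?_ ?_
            · field_simp
            · rw [hw]; field_simp
          · intro w hwH
            rw [mem_Mslope]
            have hd := hdet w hwH
            field_simp
            linear_combination hd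
      · push_neg at hZc
        have hcentkill : ∀ w ∈ H, w.1 = 0 → w.2.1 = 0 → w = 1 := by
          intro w hw h1 h2
          by_contra hne
          have h3 : w.2.2 ≠ 0 := fun h3 => hne (by rw [eta w, h1, h2, h3]; rfl)
          exact hZc w.2.2 h3 (by rw [show (mk 0 0 w.2.2 : Heisenberg p) = w from ext h1.symm h2.symm rfl]; exact hw)
        have hHx : H = Subgroup.zpowers x := by
          apply le_antisymm
          · intro y hy
            set l : ZMod p := if x.1 = 0 then y.2.1 / x.2.1 else y.1 / x.1 with hl
            have h12 : l * x.1 = y.1 ∧ l * x.2.1 = y.2.1 := by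
              have hd := hdet y hy
              by_cases hx1 : x.1 = 0
              · have hx2 : x.2.1 ≠ 0 := fun h => hxnc' ⟨hx1, h⟩
                rw [hl, if_pos hx1]
                constructor
                · rw [hx1, mul_zero]
                  rw [hx1, zero_mul] at hd
                  rcases mul_eq_zero.mp hd.symm with h | h
                  · exact absurd h hx2
                  · exact h.symm
                · field_simp
              · rw [hl, if_neg hx1]
                constructor
                · field_simp
                · field_simp
                  linear_combination -hd
            have hw' : y * (x ^ l.val)⁻¹ ∈ H := mul_mem hy (inv_mem (H.pow_mem hxH _))
            have e1 : (y * (x ^ l.val)⁻¹).1 = 0 := by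
              rw [mul_fst, inv_fst, pow_def, mk_fst, val_cast, h12.1]
              ring
            have e2 : (y * (x ^ l.val)⁻¹).2.1 = 0 := by
              rw [mul_snd, inv_snd, pow_def, mk_snd, val_cast, h12.2]
              ring
            have hone := hcentkill _ hw' e1 e2
            rw [mul_inv_eq_one] at hone
            exact mem_zpowers_iff_nat.mpr ⟨l.val, hone.symm⟩
          · rw [Subgroup.zpowers_le]
            exact hxH
        by_cases hx1 : x.1 = 0
        · have hx2 : x.2.1 ≠ 0 := fun h => hxnc' ⟨hx1, h⟩
          set x' := x ^ (x.2.1⁻¹).val with hx'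
          have hinv : (((x.2.1⁻¹).val : ℕ) : ZMod p) = x.2.1⁻¹ := val_cast _
          have hx'eq : x' = mk 0 1 x'.2.2 := by
            apply ext
            · rw [hx', pow_def, mk_fst, hx1, mul_zero]; rfl
            · rw [hx', pow_def, mk_snd, hinv, inv_mul_cancel₀ hx2]; rfl
            · rfl
          have hz : Subgroup.zpowers x' = Subgroup.zpowers x :=
            zpowers_pow_eq hodd x (by rw [hinv]; exact inv_ne_zero hx2)
          refine ⟨iline none, ConjAct.toConjAct (mk x'.2.2 0 0), ?_⟩
          show ConjAct.toConjAct (mk x'.2.2 0 0) • Subgroup.zpowers (mk 0 1 0) = H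
          rw [smul_zpowers, conj_def]
          simp only [mk_fst, mk_snd, mk_trd]
          rw [show (0 + x'.2.2 * 1 - 0 * 0 : ZMod p) = x'.2.2 by ring]
          rw [← hx'eq, hz, hHx]
        · set x' := x ^ (x.1⁻¹).val with hx'
          have hinv : (((x.1⁻¹).val : ℕ) : ZMod p) = x.1⁻¹ := val_cast _
          have hx'eq : x' = mk 1 (x.2.1 / x.1) x'.2.2 := by
            apply ext
            · rw [hx', pow_def, mk_fst, hinv, inv_mul_cancel₀ hx1]; rfl
            · rw [hx', pow_def, mk_snd, hinv]
              show x.1⁻¹ * x.2.1 = x.2.1 / x.1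
              rw [div_eq_mul_inv, mul_comm]
            · rfl
          have hz : Subgroup.zpowers x' = Subgroup.zpowers x :=
            zpowers_pow_eq hodd x (by rw [hinv]; exact inv_ne_zero hx1)
          refine ⟨iline (some (x.2.1 / x.1)), ConjAct.toConjAct (mk 0 (-x'.2.2) 0), ?_⟩
          show ConjAct.toConjAct (mk 0 (-x'.2.2) 0) • Subgroup.zpowers (mk 1 (x.2.1 / x.1) 0) = H
          rw [smul_zpowers, conj_def]
          simp only [mk_fst, mk_snd, mk_trd]
          rw [show (0 + 0 * (x.2.1 / x.1) - -x'.2.2 * 1 : ZMod p) = x'.2.2 by ring]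
          rw [← hx'eq, hz, hHx]

end HeisAux
/-- For an odd prime `p`, the Heisenberg group of order `p^3` has exactly
`2p + 5` conjugacy classes of subgroups. -/
theorem heisenberg_numConjClassesSubgroups (p : ℕ) (hp : p.Prime) (hodd : Odd p) :
    numConjClassesSubgroups (Heisenberg p) = 2 * p + 5 := by
  haveI : Fact p.Prime := ⟨hp⟩
  haveI : NeZero p := ⟨hp.ne_zero⟩
  have hbij : Function.Bijective
      (fun i : HeisAux.Idx p => (Quotient.mk'' (HeisAux.rep i) :
        Quotient (MulAction.orbitRel (ConjAct (Heisenberg p)) (Subgroup (Heisenberg p))))) := by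
    constructor
    · intro i j hij
      have hrel := Quotient.exact' hij
      rw [MulAction.orbitRel_apply, MulAction.mem_orbit_iff] at hrel
      obtain ⟨g, hg⟩ := hrel
      have hcl := HeisAux.classifier_smul g (HeisAux.rep j)
      rw [hg, HeisAux.classifier_rep hodd, HeisAux.classifier_rep hodd] at hcl
      exact hcl
    · intro q
      induction q using Quotient.inductionOn' with
      | h H =>
        obtain ⟨i, g, hg⟩ := HeisAux.classify hodd H
        refine ⟨i, ?_⟩
        apply Quotient.sound'
        rw [MulAction.orbitRel_apply, MulAction.mem_orbit_iff]
        exact ⟨g⁻¹, by rw [← hg, inv_smul_smul]⟩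
  rw [numConjClassesSubgroups, ← Nat.card_eq_of_bijective _ hbij, HeisAux.card_Idx]
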